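/- arXiv:2503.21642 — 3 statements merged into one kernel-verified Lean document; each statement's English description precedes it below -/
import Mathlib

section
/- Let g ≥ 1 and let τ, σ ∈ M_g(ℂ) with det(Im τ) ≠ 0 and det(Im σ) ≠ 0. Suppose M ∈ M_g(ℂ) with det M ≠ 0 and R ∈ M_{2g}(ℤ) satisfy M·Π(τ) = Π(σ)·R (i.e. X_τ and X_σ are isogenous). Then F_τ = F_σ as subfields of ℂ, and in particular [F_τ : ℚ] = [F_σ : ℚ]. Consequently F_τ and [F_τ : ℚ] depend only on the complex torus X_τ up to isogeny and not on the chosen period matrix. -/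
/-!
Write `R = [[A, B], [C, D]]` in `g × g` blocks. The relation `M Π(τ) = Π(σ) R` reads
`M τ = σ A + C` and `M = σ B + D`, so `M`, and then `τ = M⁻¹ (σ A + C)`, have entries in `F_σ`.

For the converse inclusion `R` must be invertible. Stacking the relation on its complex
conjugate gives `diag(M, M̄) · (Π(τ) ; Π(τ̄)) = (Π(σ) ; Π(σ̄)) · R`, and the stacked period matrix
has determinant `det (τ - τ̄) = (2i)^g det (Im τ) ≠ 0`. Hence `M⁻¹ Π(σ) = Π(τ) R⁻¹` with `R⁻¹`
rational, and the first argument with the roles of `τ` and `σ` exchanged gives `F_σ ⊆ F_τ`.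
-/

open Matrix Module IntermediateField
open scoped ComplexOrder

noncomputable section

/-- The period matrix `Π(τ) = (τ | I_g)`, a `g × 2g` complex matrix. -/
def PeriodMatrix (g : ℕ) (τ : Matrix (Fin g) (Fin g) ℂ) :
    Matrix (Fin g) (Fin g ⊕ Fin g) ℂ :=
  Matrix.fromCols τ 1

/-- `F_τ`: the subfield of `ℂ` generated over `ℚ` by the entries of `τ`. -/
def EntryField (g : ℕ) (τ : Matrix (Fin g) (Fin g) ℂ) : IntermediateField ℚ ℂ :=
  IntermediateField.adjoin ℚ {x : ℂ | ∃ i j, τ i j = x}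

namespace Matrix

section SubringClass

variable {R S : Type*} [CommRing R] [SetLike S R] [SubringClass S R] {K : S}
  {m n p : Type*}

lemma mul_apply_mem [Fintype p] {A : Matrix m p R} {B : Matrix p n R}
    (hA : ∀ i j, A i j ∈ K) (hB : ∀ i j, B i j ∈ K) (i : m) (j : n) : (A * B) i j ∈ K :=
  sum_mem fun k _ => mul_mem (hA i k) (hB k j)

lemma det_mem [Fintype n] [DecidableEq n] {A : Matrix n n R} (hA : ∀ i j, A i j ∈ K) :
    A.det ∈ K :=
  A.det_apply ▸ sum_mem fun _ _ => zsmul_mem (prod_mem fun _ _ => hA _ _) _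

lemma adjugate_apply_mem [Fintype n] [DecidableEq n] {A : Matrix n n R}
    (hA : ∀ i j, A i j ∈ K) (i j : n) : A.adjugate i j ∈ K := by
  rw [adjugate_apply]
  refine det_mem fun k l => ?_
  rw [updateRow_apply]
  split_ifs
  · rw [Pi.single_apply]
    split_ifs
    exacts [one_mem K, zero_mem K]
  · exact hA k l

end SubringClass

lemma inv_apply_mem {F S : Type*} [Field F] [SetLike S F] [SubfieldClass S F] {K : S}
    {n : Type*} [Fintype n] [DecidableEq n] {A : Matrix n n F} (hA : ∀ i j, A i j ∈ K)
    (i j : n) : A⁻¹ i j ∈ K := by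
  rw [inv_def, Ring.inverse_eq_inv', smul_apply, smul_eq_mul]
  exact mul_mem (inv_mem (det_mem hA)) (adjugate_apply_mem hA i j)

lemma inv_mul_eq_mul_inv_of_mul_eq {α m n : Type*} [CommRing α] [Fintype m] [DecidableEq m]
    [Fintype n] [DecidableEq n] {M : Matrix m m α} {N : Matrix n n α} {A B : Matrix m n α}
    (hM : IsUnit M.det) (hN : IsUnit N.det) (h : M * A = B * N) : M⁻¹ * B = A * N⁻¹ :=
  calc M⁻¹ * B = M⁻¹ * (B * N * N⁻¹) := by rw [mul_nonsing_inv_cancel_right _ _ hN]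
    _ = A * N⁻¹ := by rw [← h, Matrix.mul_assoc M, nonsing_inv_mul_cancel_left _ _ hM]

end Matrix

section PeriodMatrix

variable {g : ℕ}

lemma periodMatrix_map (f : ℂ →+* ℂ) (τ : Matrix (Fin g) (Fin g) ℂ) :
    (PeriodMatrix g τ).map f = PeriodMatrix g (τ.map f) := by
  rw [PeriodMatrix, PeriodMatrix, fromCols_map, Matrix.map_one _ f.map_zero f.map_one]

lemma det_fromRows_periodMatrix (τ τ' : Matrix (Fin g) (Fin g) ℂ) :
    (fromRows (PeriodMatrix g τ) (PeriodMatrix g τ')).det = (τ - τ').det := by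
  rw [PeriodMatrix, PeriodMatrix, fromRows_fromCols_eq_fromBlocks, det_fromBlocks_one₂₂,
    Matrix.one_mul]

lemma sub_map_conj (τ : Matrix (Fin g) (Fin g) ℂ) :
    τ - τ.map (starRingEnd ℂ) = (2 * Complex.I) • (τ.map Complex.im).map Complex.ofReal := by
  ext i j
  simp only [Matrix.sub_apply, map_apply, Matrix.smul_apply, smul_eq_mul, Complex.sub_conj]
  push_cast
  ring

lemma det_sub_map_conj_ne_zero {τ : Matrix (Fin g) (Fin g) ℂ}
    (hτ : (τ.map Complex.im).det ≠ 0) : (τ - τ.map (starRingEnd ℂ)).det ≠ 0 := by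
  have hdet : ((τ.map Complex.im).map Complex.ofReal).det = ((τ.map Complex.im).det : ℂ) :=
    (Complex.ofRealHom.map_det _).symm
  rw [sub_map_conj, det_smul, hdet]
  exact mul_ne_zero (pow_ne_zero _ (mul_ne_zero two_ne_zero Complex.I_ne_zero))
    (Complex.ofReal_ne_zero.mpr hτ)

lemma mul_periodMatrix_eq_iff {τ σ M : Matrix (Fin g) (Fin g) ℂ}
    {N : Matrix (Fin g ⊕ Fin g) (Fin g ⊕ Fin g) ℂ} :
    M * PeriodMatrix g τ = PeriodMatrix g σ * N ↔
      M * τ = σ * N.toBlocks₁₁ + N.toBlocks₂₁ ∧ M = σ * N.toBlocks₁₂ + N.toBlocks₂₂ := by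
  conv_lhs => rw [← fromBlocks_toBlocks N]
  rw [PeriodMatrix, PeriodMatrix, mul_fromCols, fromCols_mul_fromBlocks, fromCols_ext_iff]
  simp only [Matrix.mul_one, Matrix.one_mul]

lemma det_ne_zero_of_mul_periodMatrix_eq {τ σ M : Matrix (Fin g) (Fin g) ℂ}
    {N : Matrix (Fin g ⊕ Fin g) (Fin g ⊕ Fin g) ℂ} (hτ : (τ.map Complex.im).det ≠ 0)
    (hM : M.det ≠ 0) (hN : N.map (starRingEnd ℂ) = N)
    (h : M * PeriodMatrix g τ = PeriodMatrix g σ * N) : N.det ≠ 0 := by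
  set c := starRingEnd ℂ
  have hconj : M.map c * PeriodMatrix g (τ.map c) = PeriodMatrix g (σ.map c) * N := by
    simpa only [Matrix.map_mul, periodMatrix_map, hN] using congrArg (·.map c) h
  have hstack :
      fromBlocks M 0 0 (M.map c) * fromRows (PeriodMatrix g τ) (PeriodMatrix g (τ.map c)) =
        fromRows (PeriodMatrix g σ) (PeriodMatrix g (σ.map c)) * N := by
    rw [fromBlocks_mul_fromRows, fromRows_mul, Matrix.zero_mul, Matrix.zero_mul, add_zero,
      zero_add, h, hconj]
  have hdet := congrArg det hstack
  rw [det_mul, det_mul, det_fromBlocks_zero₁₂, det_fromRows_periodMatrix,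
    det_fromRows_periodMatrix] at hdet
  have hMc : (M.map c).det ≠ 0 := by
    rw [show M.map c = c.mapMatrix M from rfl, ← c.map_det]
    exact (map_ne_zero c).mpr hM
  intro hN0
  rw [hN0, mul_zero] at hdet
  exact mul_ne_zero (mul_ne_zero hM hMc) (det_sub_map_conj_ne_zero hτ) hdet

lemma entryField_le_iff {τ : Matrix (Fin g) (Fin g) ℂ} {K : IntermediateField ℚ ℂ} :
    EntryField g τ ≤ K ↔ ∀ i j, τ i j ∈ K :=
  adjoin_le_iff.trans ⟨fun h i j => h ⟨i, j, rfl⟩, fun h _ ⟨i, j, hx⟩ => hx ▸ h i j⟩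

lemma entryField_le_of_mul_periodMatrix_eq {K : IntermediateField ℚ ℂ}
    {τ σ M : Matrix (Fin g) (Fin g) ℂ} {N : Matrix (Fin g ⊕ Fin g) (Fin g ⊕ Fin g) ℂ}
    (hσ : EntryField g σ ≤ K) (hN : ∀ i j, N i j ∈ K) (hM : M.det ≠ 0)
    (h : M * PeriodMatrix g τ = PeriodMatrix g σ * N) : EntryField g τ ≤ K := by
  rw [entryField_le_iff] at hσ ⊢
  obtain ⟨hMτ, hM'⟩ := mul_periodMatrix_eq_iff.mp h
  have hMK : ∀ i j, M i j ∈ K := hM' ▸ fun i j =>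
    add_mem (mul_apply_mem hσ (fun _ _ => hN _ _) i j) (hN _ _)
  have hMτK : ∀ i j, (M * τ) i j ∈ K := hMτ ▸ fun i j =>
    add_mem (mul_apply_mem hσ (fun _ _ => hN _ _) i j) (hN _ _)
  rw [← nonsing_inv_mul_cancel_left M τ (isUnit_iff_ne_zero.mpr hM)]
  exact mul_apply_mem (inv_apply_mem hMK) hMτK

end PeriodMatrix

theorem entryField_eq_of_isogeny_general
    (g : ℕ)
    (τ σ : Matrix (Fin g) (Fin g) ℂ)
    (hτ : (τ.map Complex.im).det ≠ 0)
    (M : Matrix (Fin g) (Fin g) ℂ) (R : Matrix (Fin g ⊕ Fin g) (Fin g ⊕ Fin g) ℤ)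
    (hM : M.det ≠ 0)
    (hMR : M * PeriodMatrix g τ = PeriodMatrix g σ * R.map (Int.cast : ℤ → ℂ)) :
    EntryField g τ = EntryField g σ := by
  have hRK (K : IntermediateField ℚ ℂ) (i j) : R.map (Int.cast : ℤ → ℂ) i j ∈ K :=
    intCast_mem K _
  have hMu : IsUnit M.det := isUnit_iff_ne_zero.mpr hM
  have hRu : IsUnit (R.map (Int.cast : ℤ → ℂ)).det :=
    isUnit_iff_ne_zero.mpr (det_ne_zero_of_mul_periodMatrix_eq hτ hM (by ext; simp) hMR)
  exact le_antisymm (entryField_le_of_mul_periodMatrix_eq le_rfl (hRK _) hM hMR)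
    (entryField_le_of_mul_periodMatrix_eq le_rfl (inv_apply_mem (hRK _))
      (isUnit_nonsing_inv_det M hMu).ne_zero (inv_mul_eq_mul_inv_of_mul_eq hMu hRu hMR))

theorem entryField_eq_of_isogeny
    (g : ℕ) (hg : 1 ≤ g)
    (τ σ : Matrix (Fin g) (Fin g) ℂ)
    (hτ : (τ.map Complex.im).det ≠ 0) (hσ : (σ.map Complex.im).det ≠ 0)
    (M : Matrix (Fin g) (Fin g) ℂ) (R : Matrix (Fin g ⊕ Fin g) (Fin g ⊕ Fin g) ℤ)
    (hM : M.det ≠ 0)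
    (hMR : M * PeriodMatrix g τ = PeriodMatrix g σ * R.map (Int.cast : ℤ → ℂ)) :
    EntryField g τ = EntryField g σ :=
  entryField_eq_of_isogeny_general g τ σ hτ M R hM hMR

end
end

section
/- Let g ≥ 1 and τ = (τ_{ij}) ∈ M_g(ℂ) with det(Im τ) ≠ 0. Then ρ(τ) ≥ 2g² − g − Σ_{1≤i<j≤g} 𝔡_{ij}(τ). Moreover, if F_τ is a finite extension of ℚ of degree 𝔡 := [F_τ : ℚ], then 𝔡_{ij}(τ) ≤ 𝔡 for all i < j, and consequently 2ρ(τ) ≥ 2g² − g(g−1)(𝔡 − 2). -/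
open Matrix Module IntermediateField
open scoped ComplexOrder

noncomputable section

/-- Entrywise inclusion `ℚ → ℂ` on square matrices, as an algebra homomorphism. -/
def mapQC (g : ℕ) : Matrix (Fin g) (Fin g) ℚ →ₐ[ℚ] Matrix (Fin g) (Fin g) ℂ :=
  (Algebra.ofId ℚ ℂ).mapMatrix

/-- The ℚ-vector space `N(τ)` of triples `(A,B,C)` of rational `g × g` matrices with
`A, C` skew-symmetric and `A - Bτ + τᵗBᵗ + τᵗCτ = 0`; its dimension is the Picard
number of the complex torus `X_τ`. -/
def NSSpace (g : ℕ) (τ : Matrix (Fin g) (Fin g) ℂ) :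
    Submodule ℚ (Matrix (Fin g) (Fin g) ℚ × Matrix (Fin g) (Fin g) ℚ ×
      Matrix (Fin g) (Fin g) ℚ) where
  carrier := {x | x.1ᵀ = -x.1 ∧ x.2.2ᵀ = -x.2.2 ∧
    mapQC g x.1 - mapQC g x.2.1 * τ + τᵀ * (mapQC g x.2.1)ᵀ + τᵀ * mapQC g x.2.2 * τ = 0}
  add_mem' := by
    rintro a b ⟨ha1, ha2, ha3⟩ ⟨hb1, hb2, hb3⟩
    refine ⟨by simp [Matrix.transpose_add, ha1, hb1]; abel,
      by simp [Matrix.transpose_add, ha2, hb2]; abel, ?_⟩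
    have key : mapQC g (a + b).1 - mapQC g (a + b).2.1 * τ + τᵀ * (mapQC g (a + b).2.1)ᵀ
        + τᵀ * mapQC g (a + b).2.2 * τ
        = (mapQC g a.1 - mapQC g a.2.1 * τ + τᵀ * (mapQC g a.2.1)ᵀ + τᵀ * mapQC g a.2.2 * τ)
        + (mapQC g b.1 - mapQC g b.2.1 * τ + τᵀ * (mapQC g b.2.1)ᵀ
          + τᵀ * mapQC g b.2.2 * τ) := by
      simp only [Prod.fst_add, Prod.snd_add, map_add, Matrix.add_mul, Matrix.mul_add,
        Matrix.transpose_add]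
      abel
    rw [key, ha3, hb3, add_zero]
  zero_mem' := by
    refine ⟨by simp, by simp, ?_⟩
    simp
  smul_mem' := by
    rintro q a ⟨ha1, ha2, ha3⟩
    refine ⟨by simp [Matrix.transpose_smul, ha1], by simp [Matrix.transpose_smul, ha2], ?_⟩
    have key : mapQC g (q • a).1 - mapQC g (q • a).2.1 * τ + τᵀ * (mapQC g (q • a).2.1)ᵀ
        + τᵀ * mapQC g (q • a).2.2 * τ
        = q • (mapQC g a.1 - mapQC g a.2.1 * τ + τᵀ * (mapQC g a.2.1)ᵀ
          + τᵀ * mapQC g a.2.2 * τ) := by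
      simp only [Prod.smul_fst, Prod.smul_snd, _root_.map_smul, Matrix.transpose_smul,
        smul_mul_assoc, mul_smul_comm]
      module
    rw [key, ha3, smul_zero]

/-- The Picard number `ρ(τ) = dim_ℚ N(τ)` of the complex torus `X_τ`. -/
def picard (g : ℕ) (τ : Matrix (Fin g) (Fin g) ℂ) : ℕ :=
  Module.finrank ℚ (NSSpace g τ)

/-- `d_{ij}(τ)`: the ℚ-dimension of the span in `ℂ` of
`{1} ∪ {τ_{ki}} ∪ {τ_{kj}} ∪ {τ_{li}τ_{kj} − τ_{ki}τ_{lj}}`. -/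
def dijDim (g : ℕ) (τ : Matrix (Fin g) (Fin g) ℂ) (i j : Fin g) : ℕ :=
  Module.finrank ℚ (Submodule.span ℚ
    (({1} ∪ {x | ∃ k, τ k i = x} ∪ {x | ∃ k, τ k j = x}
      ∪ {x | ∃ l k, τ l i * τ k j - τ k i * τ l j = x}) : Set ℂ))

/-!
The triples `(A, B, C)` with `A` and `C` skew form a `ℚ`-space of dimension `2g² - g`, on which
the Riemann form `R(A, B, C) = A - Bτ + τᵀBᵀ + τᵀCτ` is skew; so `N(τ)` is cut out there by the
conditions `R_ij = 0` for `i < j`. Since `C` is skew,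
`2 (τᵀCτ)_ij = Σ C_lk (τ_li τ_kj - τ_ki τ_lj)`, so `R_ij` always lies in the span whose dimension
is `𝔡_ij`, and by rank–nullity each condition costs at most `𝔡_ij` dimensions. When `F_τ` is a number field all these spans lie in `F_τ`.
-/

open Finset

theorem Nat.two_mul_choose_two_add_self (n : ℕ) : 2 * n.choose 2 + n = n * n := by
  induction n with
  | zero => rfl
  | succ n ih =>
    rw [Nat.choose_succ_succ', Nat.choose_one_right]
    linarith

theorem two_mul_card_filter_fst_lt_snd_add (ι : Type*) [Fintype ι] [LinearOrder ι] :
    2 * #{p : ι × ι | p.1 < p.2} + Fintype.card ι = Fintype.card ι * Fintype.card ι := by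
  rw [Fintype.card_product_filter_lt]
  exact Nat.two_mul_choose_two_add_self _

theorem LinearMap.finrank_le_finrank_ker_add {K V W : Type*} [DivisionRing K] [AddCommGroup V]
    [Module K V] [AddCommGroup W] [Module K W] [FiniteDimensional K V] [FiniteDimensional K W]
    (f : V →ₗ[K] W) : finrank K V ≤ finrank K (ker f) + finrank K W := by
  rw [← f.finrank_range_add_finrank_ker, add_comm]
  exact Nat.add_le_add_left (Submodule.finrank_le _) _

theorem IntermediateField.finrank_span_le_of_subset {K L : Type*} [Field K] [Field L]
    [Algebra K L] (F : IntermediateField K L) [FiniteDimensional K F] {s : Set L}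
    (hs : s ⊆ F) : finrank K (Submodule.span K s) ≤ finrank K F := by
  have : Module.Finite K (Subalgebra.toSubmodule F.toSubalgebra) := ‹FiniteDimensional K F›
  exact (Submodule.finrank_mono (Submodule.span_le.2 hs)).trans_eq
    F.toSubalgebra.finrank_toSubmodule

namespace Matrix

variable {ι R : Type*}

section symmSum
variable (S : Type*) [Semiring S] [AddCommGroup R] [Module S R]

-- Indexing by `Sym2 ι` imposes the condition `A i j + A j i = 0` once per unordered pair.
def symmSum : Matrix ι ι R →ₗ[S] Sym2 ι → R where
  toFun A := Sym2.lift ⟨fun i j => A i j + A j i, fun _ _ => add_comm _ _⟩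
  map_add' A B := by
    ext z
    induction z
    simp only [Sym2.lift_mk, add_apply, Pi.add_apply]
    abel
  map_smul' c A := by
    ext z
    induction z
    simp [smul_add]

variable {S} in
theorem symmSum_eq_zero_iff {A : Matrix ι ι R} : symmSum S A = 0 ↔ Aᵀ = -A := by
  simp only [funext_iff, Sym2.forall, symmSum, LinearMap.coe_mk, AddHom.coe_mk, Sym2.lift_mk,
    Pi.zero_apply, add_eq_zero_iff_eq_neg', ← ext_iff, transpose_apply, neg_apply]

end symmSum

theorem eq_zero_of_transpose_eq_neg [LinearOrder ι] [NonAssocRing R] [NoZeroDivisors R]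
    [CharZero R] {M : Matrix ι ι R} (hM : Mᵀ = -M) (hupper : ∀ i j, i < j → M i j = 0) :
    M = 0 := by
  ext i j
  have hji : M j i = -M i j := congr_fun₂ hM i j
  rcases lt_trichotomy i j with hij | rfl | hij
  · exact hupper i j hij
  · exact CharZero.eq_neg_self_iff.mp hji
  · rw [zero_apply, ← neg_eq_zero, ← hji, hupper j i hij]

end Matrix

abbrev RationalTriple (g : ℕ) :=
  Matrix (Fin g) (Fin g) ℚ × Matrix (Fin g) (Fin g) ℚ × Matrix (Fin g) (Fin g) ℚ

section RiemannForm

variable {g : ℕ} (τ : Matrix (Fin g) (Fin g) ℂ)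

theorem mapQC_apply (A : Matrix (Fin g) (Fin g) ℚ) (i j : Fin g) : mapQC g A i j = A i j := rfl

theorem mapQC_transpose (A : Matrix (Fin g) (Fin g) ℚ) : (mapQC g A)ᵀ = mapQC g Aᵀ := rfl

def riemannForm : RationalTriple g →ₗ[ℚ] Matrix (Fin g) (Fin g) ℂ where
  toFun x := mapQC g x.1 - mapQC g x.2.1 * τ + τᵀ * (mapQC g x.2.1)ᵀ + τᵀ * mapQC g x.2.2 * τ
  map_add' x y := by
    simp only [Prod.fst_add, Prod.snd_add, map_add, Matrix.add_mul, Matrix.mul_add,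
      Matrix.transpose_add]
    abel
  map_smul' c x := by
    simp only [Prod.smul_fst, Prod.smul_snd, _root_.map_smul, Matrix.transpose_smul,
      smul_mul_assoc, mul_smul_comm, RingHom.id_apply]
    module

theorem mem_NSSpace_iff {x : RationalTriple g} :
    x ∈ NSSpace g τ ↔ x.1ᵀ = -x.1 ∧ x.2.2ᵀ = -x.2.2 ∧ riemannForm τ x = 0 := Iff.rfl

theorem riemannForm_transpose {x : RationalTriple g} (hA : x.1ᵀ = -x.1) (hC : x.2.2ᵀ = -x.2.2) :
    (riemannForm τ x)ᵀ = -riemannForm τ x := by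
  simp only [riemannForm, LinearMap.coe_mk, AddHom.coe_mk, Matrix.transpose_add,
    Matrix.transpose_sub, Matrix.transpose_mul, Matrix.transpose_transpose, mapQC_transpose, hA,
    hC, map_neg, Matrix.neg_mul, Matrix.mul_neg, Matrix.mul_assoc]
  abel

def dijSpan (i j : Fin g) : Submodule ℚ ℂ :=
  Submodule.span ℚ ({1} ∪ {x | ∃ k, τ k i = x} ∪ {x | ∃ k, τ k j = x}
      ∪ {x | ∃ l k, τ l i * τ k j - τ k i * τ l j = x})

instance (i j : Fin g) : FiniteDimensional ℚ (dijSpan τ i j) :=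
  FiniteDimensional.span_of_finite ℚ <|
    (((Set.finite_singleton 1).union (Set.finite_range fun k => τ k i)).union
      (Set.finite_range fun k => τ k j)).union <|
    (Set.finite_range fun p : Fin g × Fin g => τ p.1 i * τ p.2 j - τ p.2 i * τ p.1 j).subset
      (by rintro _ ⟨l, k, rfl⟩; exact ⟨(l, k), rfl⟩)

theorem finrank_dijSpan (i j : Fin g) : finrank ℚ (dijSpan τ i j) = dijDim g τ i j := rfl

theorem two_mul_quadratic_entry {C : Matrix (Fin g) (Fin g) ℚ} (hC : Cᵀ = -C) (i j : Fin g) :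
    2 * (τᵀ * mapQC g C * τ) i j = ∑ l, ∑ k, (C l k : ℂ) * (τ l i * τ k j - τ k i * τ l j) := by
  have hC' : ∀ l k, (C k l : ℂ) = -C l k := fun l k => by exact_mod_cast congr_fun₂ hC l k
  have hswap : ∑ l, ∑ k, (C l k : ℂ) * (τ k i * τ l j)
      = -∑ l, ∑ k, (C l k : ℂ) * (τ l i * τ k j) := by
    rw [Finset.sum_comm, ← Finset.sum_neg_distrib]
    refine Finset.sum_congr rfl fun l _ => ?_
    rw [← Finset.sum_neg_distrib]
    refine Finset.sum_congr rfl fun k _ => ?_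
    rw [hC', neg_mul]
  simp only [mul_sub, Finset.sum_sub_distrib, hswap, sub_neg_eq_add, ← two_mul, mul_apply,
    transpose_apply, Finset.sum_mul, mapQC_apply]
  rw [Finset.sum_comm]
  congr 1
  exact Finset.sum_congr rfl fun l _ => Finset.sum_congr rfl fun k _ => by ring

theorem riemannForm_apply_mem_dijSpan {x : RationalTriple g} (hC : x.2.2ᵀ = -x.2.2)
    (i j : Fin g) : riemannForm τ x i j ∈ dijSpan τ i j := by
  have one_mem : (1 : ℂ) ∈ dijSpan τ i j := Submodule.subset_span (by simp)
  have left_mem : ∀ k, τ k i ∈ dijSpan τ i j := fun k => Submodule.subset_span (by simp)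
  have right_mem : ∀ k, τ k j ∈ dijSpan τ i j := fun k => Submodule.subset_span (by simp)
  have minor_mem : ∀ l k, τ l i * τ k j - τ k i * τ l j ∈ dijSpan τ i j :=
    fun l k => Submodule.subset_span (by simp)
  have rat_mul_mem : ∀ (q : ℚ) {z : ℂ}, z ∈ dijSpan τ i j → (q : ℂ) * z ∈ dijSpan τ i j :=
    fun q z hz => Rat.smul_def q z ▸ Submodule.smul_mem _ q hz
  have hquad : (τᵀ * mapQC g x.2.2 * τ) i j ∈ dijSpan τ i j := by
    rw [← (dijSpan τ i j).smul_mem_iff (two_ne_zero : (2 : ℚ) ≠ 0), Rat.smul_def, Rat.cast_ofNat,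
      two_mul_quadratic_entry τ hC]
    exact sum_mem fun l _ => sum_mem fun k _ => rat_mul_mem _ (minor_mem l k)
  simp only [riemannForm, LinearMap.coe_mk, AddHom.coe_mk, Matrix.add_apply, Matrix.sub_apply,
    mul_apply, transpose_apply, mapQC_apply]
  refine add_mem (add_mem (sub_mem ?_ ?_) ?_) hquad
  · simpa using rat_mul_mem (x.1 i j) one_mem
  · exact sum_mem fun k _ => rat_mul_mem _ (right_mem k)
  · exact sum_mem fun k _ => mul_comm (x.2.1 j k : ℂ) (τ k i) ▸ rat_mul_mem _ (left_mem k)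

def symmetricParts (g : ℕ) :
    RationalTriple g →ₗ[ℚ] (Sym2 (Fin g) → ℚ) × (Sym2 (Fin g) → ℚ) :=
  (symmSum ℚ ∘ₗ LinearMap.fst ℚ _ _).prod
    (symmSum ℚ ∘ₗ LinearMap.snd ℚ _ _ ∘ₗ LinearMap.snd ℚ _ _)

theorem mem_ker_symmetricParts {x : RationalTriple g} :
    x ∈ LinearMap.ker (symmetricParts g) ↔ x.1ᵀ = -x.1 ∧ x.2.2ᵀ = -x.2.2 := by
  simp [symmetricParts, symmSum_eq_zero_iff]

theorem two_mul_sq_le_finrank_ker_symmetricParts :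
    2 * g ^ 2 ≤ finrank ℚ (LinearMap.ker (symmetricParts g)) + g := by
  have h := (symmetricParts g).finrank_le_finrank_ker_add
  simp only [Module.finrank_prod, Module.finrank_matrix, Module.finrank_pi, Module.finrank_self,
    Sym2.card, Fintype.card_fin, Nat.choose_succ_succ', Nat.choose_one_right] at h
  linarith [Nat.two_mul_choose_two_add_self g]

def upperEntries : LinearMap.ker (symmetricParts g) →ₗ[ℚ]
    Π p : {p : Fin g × Fin g // p.1 < p.2}, dijSpan τ p.1.1 p.1.2 :=
  LinearMap.pi fun p => LinearMap.codRestrict _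
    (entryLinearMap ℚ ℂ p.1.1 p.1.2 ∘ₗ riemannForm τ ∘ₗ Submodule.subtype _) fun x =>
      riemannForm_apply_mem_dijSpan τ (mem_ker_symmetricParts.mp x.2).2 _ _

theorem map_ker_upperEntries :
    (LinearMap.ker (upperEntries τ)).map (LinearMap.ker (symmetricParts g)).subtype
      = NSSpace g τ := by
  ext x
  simp only [Submodule.mem_map, LinearMap.mem_ker, Submodule.coe_subtype, mem_NSSpace_iff]
  constructor
  · rintro ⟨⟨x, hx⟩, hker, rfl⟩
    obtain ⟨hA, hC⟩ := mem_ker_symmetricParts.mp hx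
    refine ⟨hA, hC, Matrix.eq_zero_of_transpose_eq_neg (riemannForm_transpose τ hA hC)
      fun i j hij => ?_⟩
    exact congr_arg Subtype.val (congr_fun hker ⟨(i, j), hij⟩)
  · rintro ⟨hA, hC, h0⟩
    refine ⟨⟨x, mem_ker_symmetricParts.mpr ⟨hA, hC⟩⟩, funext fun p => Subtype.ext ?_, rfl⟩
    exact congr_fun₂ h0 p.1.1 p.1.2

theorem two_mul_sq_le_picard_add_sum_dijDim :
    2 * g ^ 2 ≤ picard g τ + g + ∑ p : Fin g × Fin g with p.1 < p.2, dijDim g τ p.1 p.2 := by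
  have h := (upperEntries τ).finrank_le_finrank_ker_add
  simp only [Module.finrank_pi_fintype, finrank_dijSpan] at h
  rw [← Finset.sum_subtype _ (fun _ => Finset.mem_filter_univ _)
    (fun p : Fin g × Fin g => dijDim g τ p.1 p.2)] at h
  have hρ : picard g τ = finrank ℚ (LinearMap.ker (upperEntries τ)) := by
    rw [picard, ← map_ker_upperEntries]
    exact Submodule.finrank_map_subtype_eq _ _
  have := two_mul_sq_le_finrank_ker_symmetricParts (g := g)
  omega

theorem dijDim_le_finrank_entryField [FiniteDimensional ℚ (EntryField g τ)] (i j : Fin g) :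
    dijDim g τ i j ≤ finrank ℚ (EntryField g τ) := by
  have entry_mem : ∀ k l, τ k l ∈ EntryField g τ := fun k l =>
    IntermediateField.subset_adjoin ℚ _ ⟨k, l, rfl⟩
  refine (EntryField g τ).finrank_span_le_of_subset ?_
  rintro _ (((rfl | ⟨k, rfl⟩) | ⟨k, rfl⟩) | ⟨l, k, rfl⟩)
  · exact one_mem _
  · exact entry_mem k i
  · exact entry_mem k j
  · exact sub_mem (mul_mem (entry_mem l i) (entry_mem k j))
      (mul_mem (entry_mem k i) (entry_mem l j))

end RiemannForm

theorem picard_lower_bounds_general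
    (g : ℕ) (τ : Matrix (Fin g) (Fin g) ℂ) :
    ((2 * (g : ℤ) ^ 2 - g
        - ∑ p ∈ Finset.univ.filter (fun p : Fin g × Fin g => p.1 < p.2),
            (dijDim g τ p.1 p.2 : ℤ))
      ≤ (picard g τ : ℤ)) ∧
    (FiniteDimensional ℚ (EntryField g τ) →
      (∀ i j : Fin g, i < j → dijDim g τ i j ≤ Module.finrank ℚ (EntryField g τ)) ∧
      (2 * (g : ℤ) ^ 2
          - (g : ℤ) * ((g : ℤ) - 1) * ((Module.finrank ℚ (EntryField g τ) : ℤ) - 2)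
        ≤ 2 * (picard g τ : ℤ))) := by
  have hlower := two_mul_sq_le_picard_add_sum_dijDim τ
  zify at hlower
  refine ⟨by linarith, fun _ => ⟨fun i j _ => dijDim_le_finrank_entryField τ i j, ?_⟩⟩
  have hsum : ∑ p : Fin g × Fin g with p.1 < p.2, dijDim g τ p.1 p.2
      ≤ #{p : Fin g × Fin g | p.1 < p.2} * finrank ℚ (EntryField g τ) :=
    Finset.sum_le_card_nsmul _ _ _ fun p _ => dijDim_le_finrank_entryField τ p.1 p.2
  have hpairs := two_mul_card_filter_fst_lt_snd_add (Fin g)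
  rw [Fintype.card_fin] at hpairs
  zify at hsum hpairs
  linear_combination 2 * hlower + 2 * hsum + (finrank ℚ (EntryField g τ) : ℤ) * hpairs

theorem picard_lower_bounds
    (g : ℕ) (hg : 1 ≤ g) (τ : Matrix (Fin g) (Fin g) ℂ)
    (him : (τ.map Complex.im).det ≠ 0) :
    ((2 * (g : ℤ) ^ 2 - g
        - ∑ p ∈ Finset.univ.filter (fun p : Fin g × Fin g => p.1 < p.2),
            (dijDim g τ p.1 p.2 : ℤ))
      ≤ (picard g τ : ℤ)) ∧
    (FiniteDimensional ℚ (EntryField g τ) →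
      (∀ i j : Fin g, i < j → dijDim g τ i j ≤ Module.finrank ℚ (EntryField g τ)) ∧
      (2 * (g : ℤ) ^ 2
          - (g : ℤ) * ((g : ℤ) - 1) * ((Module.finrank ℚ (EntryField g τ) : ℤ) - 2)
        ≤ 2 * (picard g τ : ℤ))) :=
  picard_lower_bounds_general g τ

end
end

section
/- Let g ≥ 1 and τ = (τ_{ij}) ∈ M_g(ℂ) with det(Im τ) ≠ 0. If ρ(τ) < g, then F_τ is not an extension of ℚ of degree at most 4; that is, either F_τ is infinite-dimensional over ℚ or [F_τ : ℚ] ≥ 5. Equivalently, if F_τ is a finite extension of ℚ with [F_τ : ℚ] ≤ 4, then ρ(τ) ≥ g. -/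
open Matrix Module IntermediateField
open scoped ComplexOrder

noncomputable section

/-!
The triples `(A, B, C)` with `A, C` skew-symmetric form a `ℚ`-space of dimension
`g² + g(g-1)`. For such a triple, `A - Bτ + τᵀBᵀ + τᵀCτ` is skew-symmetric with entries in `F_τ`,
so it is determined by its `g(g-1)/2` entries above the diagonal, which range over a `ℚ`-space of
dimension `[F_τ : ℚ] · g(g-1)/2 ≤ 2g(g-1)`. By rank–nullity, `N(τ)` has dimension at least
`g² + g(g-1) - 2g(g-1) = g`.
-/

namespace Matrix

/-- `⟨j, i⟩` stands for the position `(i, j)`, `i < j`, above the diagonal. -/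
abbrev UpperIdx (g : ℕ) := Σ j : Fin g, Fin j

theorem card_upperIdx_mul_two (g : ℕ) : Fintype.card (UpperIdx g) * 2 = g * (g - 1) := by
  simp only [Fintype.card_sigma, Fintype.card_fin]
  rw [Fin.sum_univ_eq_sum_range (fun i => i) g]
  exact Finset.sum_range_id_mul_two g

section Skew

variable {g : ℕ}

def upperEntry {R : Type*} (M : Matrix (Fin g) (Fin g) R) (p : UpperIdx g) : R :=
  M ⟨p.2, p.2.isLt.trans p.1.isLt⟩ p.1

def upperEntryLinearMap (S R : Type*) [Semiring S] [AddCommMonoid R] [Module S R] :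
    Matrix (Fin g) (Fin g) R →ₗ[S] (UpperIdx g → R) where
  toFun := upperEntry
  map_add' _ _ := rfl
  map_smul' _ _ := rfl

theorem eq_zero_of_transpose_eq_neg_of_upperEntry_eq_zero {R : Type*} [AddCommGroup R]
    [IsAddTorsionFree R] {M : Matrix (Fin g) (Fin g) R} (hM : Mᵀ = -M)
    (hup : upperEntry M = 0) : M = 0 := by
  have hlt : ∀ i j : Fin g, i < j → M i j = 0 := fun i j hij =>
    congrFun hup ⟨j, ⟨i, hij⟩⟩
  have hskew : ∀ i j, M j i = -M i j := fun i j => congrFun (congrFun hM i) j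
  ext i j
  rcases lt_trichotomy i j with hij | rfl | hji
  · exact hlt i j hij
  · exact self_eq_neg.mp (hskew i i)
  · rw [hskew, hlt j i hji, neg_zero, zero_apply]

def skewOfUpper (R : Type*) [CommRing R] : (UpperIdx g → R) →ₗ[R] Matrix (Fin g) (Fin g) R where
  toFun a := Matrix.of fun r c =>
    if h : r < c then a ⟨c, ⟨r, h⟩⟩ else if h' : c < r then -a ⟨r, ⟨c, h'⟩⟩ else 0
  map_add' a b := by
    ext r c
    simp only [of_apply, add_apply, Pi.add_apply]
    split_ifs <;> ring
  map_smul' q a := by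
    ext r c
    simp only [of_apply, smul_apply, Pi.smul_apply, RingHom.id_apply, smul_eq_mul]
    split_ifs <;> ring

theorem transpose_skewOfUpper {R : Type*} [CommRing R] (a : UpperIdx g → R) :
    (skewOfUpper R a)ᵀ = -skewOfUpper R a := by
  ext r c
  simp only [skewOfUpper, LinearMap.coe_mk, AddHom.coe_mk, transpose_apply, neg_apply, of_apply]
  split_ifs <;> first | (exfalso; omega) | rfl | ring

theorem upperEntry_skewOfUpper {R : Type*} [CommRing R] (a : UpperIdx g → R) :
    upperEntry (skewOfUpper R a) = a := by
  funext ⟨j, i⟩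
  have hij : (⟨i, i.isLt.trans j.isLt⟩ : Fin g) < j := i.isLt
  simp [upperEntry, skewOfUpper, hij]

theorem skewOfUpper_injective (R : Type*) [CommRing R] :
    Function.Injective (skewOfUpper (g := g) R) :=
  Function.LeftInverse.injective upperEntry_skewOfUpper

end Skew

end Matrix

section NeronSeveri

variable {n K L : Type*} [Fintype n] [DecidableEq n] [CommRing K] [Algebra ℚ K] [CommRing L]
  [Algebra ℚ L]

def nsForm (T : Matrix n n K) :
    (Matrix n n ℚ × Matrix n n ℚ × Matrix n n ℚ) →ₗ[ℚ] Matrix n n K where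
  toFun x := (Algebra.ofId ℚ K).mapMatrix x.1 - (Algebra.ofId ℚ K).mapMatrix x.2.1 * T
    + Tᵀ * ((Algebra.ofId ℚ K).mapMatrix x.2.1)ᵀ + Tᵀ * (Algebra.ofId ℚ K).mapMatrix x.2.2 * T
  map_add' a b := by
    simp only [Prod.fst_add, Prod.snd_add, map_add, add_mul, mul_add, transpose_add]
    abel
  map_smul' q a := by
    simp only [Prod.smul_fst, Prod.smul_snd, _root_.map_smul, transpose_smul, smul_mul_assoc,
      mul_smul_comm, RingHom.id_apply]
    module

/-- `N(T)` for `T` over any commutative `ℚ`-algebra; `NSSpace g τ` is `nsKernel τ` by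
definition. -/
def nsKernel (T : Matrix n n K) : Submodule ℚ (Matrix n n ℚ × Matrix n n ℚ × Matrix n n ℚ) where
  carrier := {x | x.1ᵀ = -x.1 ∧ x.2.2ᵀ = -x.2.2 ∧ nsForm T x = 0}
  add_mem' := by
    rintro a b ⟨ha₁, ha₃, ha⟩ ⟨hb₁, hb₃, hb⟩
    refine ⟨?_, ?_, by rw [map_add, ha, hb, add_zero]⟩ <;>
      simp only [Prod.fst_add, Prod.snd_add, transpose_add, ha₁, ha₃, hb₁, hb₃, neg_add]
  zero_mem' := by simp
  smul_mem' := by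
    rintro q a ⟨ha₁, ha₃, ha⟩
    exact ⟨by simp [ha₁], by simp [ha₃], by rw [map_smul, ha, smul_zero]⟩

theorem transpose_nsForm (T : Matrix n n K) {x : Matrix n n ℚ × Matrix n n ℚ × Matrix n n ℚ}
    (h₁ : x.1ᵀ = -x.1) (h₃ : x.2.2ᵀ = -x.2.2) : (nsForm T x)ᵀ = -nsForm T x := by
  have hmap : ∀ A : Matrix n n ℚ, ((Algebra.ofId ℚ K).mapMatrix A)ᵀ =
      (Algebra.ofId ℚ K).mapMatrix Aᵀ := fun A => by
    simp [AlgHom.mapMatrix_apply, transpose_map]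
  simp only [nsForm, LinearMap.coe_mk, AddHom.coe_mk, transpose_add, transpose_sub,
    transpose_mul, transpose_transpose, hmap, h₁, h₃, map_neg, neg_mul, mul_neg, ← mul_assoc]
  abel

theorem map_nsForm (f : K →ₐ[ℚ] L) (T : Matrix n n K)
    (x : Matrix n n ℚ × Matrix n n ℚ × Matrix n n ℚ) :
    f.mapMatrix (nsForm T x) = nsForm (f.mapMatrix T) x := by
  have hmap : ∀ A : Matrix n n ℚ, f.mapMatrix ((Algebra.ofId ℚ K).mapMatrix A) =
      (Algebra.ofId ℚ L).mapMatrix A := fun A => by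
    ext
    simp [AlgHom.mapMatrix_apply]
  have htr : ∀ M : Matrix n n K, f.mapMatrix Mᵀ = (f.mapMatrix M)ᵀ := fun _ => transpose_map
  simp only [nsForm, LinearMap.coe_mk, AddHom.coe_mk, map_add, map_sub, map_mul, htr, hmap]

theorem nsKernel_le_map (f : K →ₐ[ℚ] L) (T : Matrix n n K) :
    nsKernel T ≤ nsKernel (f.mapMatrix T) := by
  rintro x ⟨h₁, h₃, h⟩
  exact ⟨h₁, h₃, by rw [← map_nsForm, h, map_zero]⟩

end NeronSeveri

section DimensionCount

variable {g : ℕ} {K : Type*} [CommRing K] [Algebra ℚ K]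

/-- Triples `(A, B, C)` with `A` and `C` skew-symmetric, by the free entries of `A`, `B`, `C`. -/
def skewParam : ((UpperIdx g → ℚ) × Matrix (Fin g) (Fin g) ℚ × (UpperIdx g → ℚ)) →ₗ[ℚ]
    (Matrix (Fin g) (Fin g) ℚ × Matrix (Fin g) (Fin g) ℚ × Matrix (Fin g) (Fin g) ℚ) :=
  (skewOfUpper ℚ).prodMap (LinearMap.id.prodMap (skewOfUpper ℚ))

theorem skewParam_injective : Function.Injective (skewParam (g := g)) := by
  simp only [skewParam, LinearMap.coe_prodMap, LinearMap.id_coe]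
  exact (skewOfUpper_injective ℚ).prodMap (Function.injective_id.prodMap (skewOfUpper_injective ℚ))

def upperNSForm (T : Matrix (Fin g) (Fin g) K) :
    ((UpperIdx g → ℚ) × Matrix (Fin g) (Fin g) ℚ × (UpperIdx g → ℚ)) →ₗ[ℚ] (UpperIdx g → K) :=
  upperEntryLinearMap ℚ K ∘ₗ nsForm T ∘ₗ skewParam

theorem skewParam_mem_nsKernel {T : Matrix (Fin g) (Fin g) K}
    {p : (UpperIdx g → ℚ) × Matrix (Fin g) (Fin g) ℚ × (UpperIdx g → ℚ)}
    (hp : upperNSForm T p = 0) : skewParam p ∈ nsKernel T := by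
  have h₁ := transpose_skewOfUpper p.1
  have h₃ := transpose_skewOfUpper p.2.2
  have : IsAddTorsionFree K := .of_module_rat K
  exact ⟨h₁, h₃, eq_zero_of_transpose_eq_neg_of_upperEntry_eq_zero (transpose_nsForm T h₁ h₃) hp⟩

/-- Rank–nullity for `upperNSForm T`, whose kernel embeds into `N(T)` through `skewParam`. -/
theorem finrank_le_finrank_nsKernel_add (T : Matrix (Fin g) (Fin g) K) [Module.Finite ℚ K] :
    finrank ℚ ((UpperIdx g → ℚ) × Matrix (Fin g) (Fin g) ℚ × (UpperIdx g → ℚ)) ≤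
      finrank ℚ (nsKernel T) + finrank ℚ (UpperIdx g → K) := by
  let ι : LinearMap.ker (upperNSForm T) →ₗ[ℚ] nsKernel T :=
    LinearMap.codRestrict _ (skewParam ∘ₗ (LinearMap.ker _).subtype)
      fun p => skewParam_mem_nsKernel p.2
  have hι : Function.Injective ι := fun p q hpq =>
    Subtype.ext (skewParam_injective (congrArg Subtype.val hpq))
  have hker := LinearMap.finrank_le_finrank_of_injective hι
  have hrange := (LinearMap.range (upperNSForm T)).finrank_le
  have := (upperNSForm T).finrank_range_add_finrank_ker
  omega

theorem le_finrank_nsKernel_of_finrank_le_four (T : Matrix (Fin g) (Fin g) K) [Module.Finite ℚ K]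
    (hK : finrank ℚ K ≤ 4) : g ≤ finrank ℚ (nsKernel T) := by
  have hcount := finrank_le_finrank_nsKernel_add T
  rw [finrank_prod, finrank_prod, finrank_pi, finrank_matrix, finrank_pi_fintype] at hcount
  simp only [Fintype.card_fin, finrank_self, mul_one, Finset.sum_const, Finset.card_univ,
    smul_eq_mul] at hcount
  have hcard := card_upperIdx_mul_two g
  have hsq : g * (g - 1) + g = g * g := by cases g <;> simp [Nat.mul_succ]
  nlinarith

end DimensionCount

def entryMatrix (g : ℕ) (τ : Matrix (Fin g) (Fin g) ℂ) : Matrix (Fin g) (Fin g) (EntryField g τ) :=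
  Matrix.of fun i j => ⟨τ i j, subset_adjoin ℚ _ ⟨i, j, rfl⟩⟩

theorem picard_ge_dim_of_deg_le_four_general
    (g : ℕ) (τ : Matrix (Fin g) (Fin g) ℂ)
    (hfin : FiniteDimensional ℚ (EntryField g τ))
    (hdeg : Module.finrank ℚ (EntryField g τ) ≤ 4) :
    g ≤ picard g τ :=
  calc g ≤ finrank ℚ (nsKernel (entryMatrix g τ)) := le_finrank_nsKernel_of_finrank_le_four _ hdeg
    _ ≤ finrank ℚ (nsKernel ((EntryField g τ).val.mapMatrix (entryMatrix g τ))) :=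
      Submodule.finrank_mono (nsKernel_le_map _ _)
    _ = picard g τ := rfl

theorem picard_ge_dim_of_deg_le_four
    (g : ℕ) (hg : 1 ≤ g) (τ : Matrix (Fin g) (Fin g) ℂ)
    (him : (τ.map Complex.im).det ≠ 0)
    (hfin : FiniteDimensional ℚ (EntryField g τ))
    (hdeg : Module.finrank ℚ (EntryField g τ) ≤ 4) :
    g ≤ picard g τ :=
  picard_ge_dim_of_deg_le_four_general g τ hfin hdeg
end
end
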